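/- arXiv:2307.01962 — 8 statements merged into one kernel-verified Lean document; each statement's English description precedes it below -/
import Mathlib

section
/- Let M be an n×n block matrix with blocks A (k×k, nonsingular), B, C, D, and let S = D - C A^{-1} B be the Schur complement of A in M. For any row indices k+1 ≤ i_1 < ... < i_s ≤ n and column indices k+1 ≤ j_1 < ... < j_s ≤ n, the determinant of the submatrix of M with rows {1,...,k, i_1,...,i_s} and columns {1,...,k, j_1,...,j_s} equals det(A) times the determinant of the submatrix of S with rows i_1,...,i_s and columns j_1,...,j_s. -/
open Matrix

theorem Matrix.submatrix_sumMap_eq_fromBlocks {α l m n o l' m' n' o' : Type*}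
    (M : Matrix (l ⊕ m) (n ⊕ o) α) (r₁ : l' → l) (r₂ : m' → m) (c₁ : n' → n) (c₂ : o' → o) :
    M.submatrix (Sum.map r₁ r₂) (Sum.map c₁ c₂) =
      fromBlocks (M.toBlocks₁₁.submatrix r₁ c₁) (M.toBlocks₁₂.submatrix r₁ c₂)
        (M.toBlocks₂₁.submatrix r₂ c₁) (M.toBlocks₂₂.submatrix r₂ c₂) := by
  ext (i | i) (j | j) <;> rfl

theorem stmt0_general {K : Type*} [Field K] {k m s : ℕ}
    (M : Matrix (Fin k ⊕ Fin m) (Fin k ⊕ Fin m) K)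
    (hA : IsUnit (M.toBlocks₁₁).det)
    (f g : Fin s → Fin m) :
    (M.submatrix (Sum.map id f) (Sum.map id g)).det =
      (M.toBlocks₁₁).det *
        ((M.toBlocks₂₂ - M.toBlocks₂₁ * (M.toBlocks₁₁)⁻¹ * M.toBlocks₁₂).submatrix f g).det := by
  have := hA.invertible
  have := M.toBlocks₁₁.invertibleOfDetInvertible
  rw [submatrix_sumMap_eq_fromBlocks, submatrix_id_id, det_fromBlocks₁₁, invOf_eq_nonsing_inv]
  -- taking the submatrix on rows `f` and columns `g` commutes with forming `D - C A⁻¹ B`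
  rfl

/-- Schur complement determinant lemma for submatrices: for a block matrix
`M = [[A, B], [C, D]]` with `A` nonsingular, and strictly increasing selections of
rows `f` and columns `g` from the second block, the determinant of the submatrix of `M`
on rows `{1,…,k} ∪ f` and columns `{1,…,k} ∪ g` equals `det A` times the determinant of
the corresponding submatrix of the Schur complement `S = D - C A⁻¹ B`. -/
theorem stmt0 {K : Type*} [Field K] {k m s : ℕ}
    (M : Matrix (Fin k ⊕ Fin m) (Fin k ⊕ Fin m) K)
    (hA : IsUnit (M.toBlocks₁₁).det)
    (f g : Fin s → Fin m) (hf : StrictMono f) (hg : StrictMono g) :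
    (M.submatrix (Sum.map id f) (Sum.map id g)).det =
      (M.toBlocks₁₁).det *
        ((M.toBlocks₂₂ - M.toBlocks₂₁ * (M.toBlocks₁₁)⁻¹ * M.toBlocks₁₂).submatrix f g).det :=
  stmt0_general M hA f g
end

section
/- Let L be an n×n matrix over a commutative ring whose every row sum is zero (i.e., L multiplied by the all-ones vector is zero). Then for any fixed row index i, the quantity (-1)^{i+j} det(L(i,j)) is independent of the column index j, where L(i,j) denotes L with row i and column j deleted. -/
/-! The cofactor `(-1)^(i+j) det L(i,j)` is the adjugate entry `adj L j i`, i.e. the determinant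
of `L` with row `i` replaced by the unit vector `e_j`. By linearity in that row, the difference of
two such cofactors is the determinant of `L` with row `i` replaced by `e_j - e_j'`. That row also
sums to zero, so the modified matrix still kills the all-ones vector and its determinant vanishes. -/

open Matrix

section

variable {n R : Type*} [Fintype n] [DecidableEq n] [CommRing R]

theorem Matrix.det_eq_zero_of_mulVec_one_eq_zero [Nonempty n] {A : Matrix n n R}
    (h : A *ᵥ 1 = 0) : A.det = 0 :=
  det_eq_zero_of_mulVec_eq_zero_of_mem_nonZeroDivisors h (i := Classical.arbitrary n)
    (one_mem _)

theorem Matrix.adjugate_apply_eq_of_mulVec_one_eq_zero {A : Matrix n n R} (h : A *ᵥ 1 = 0)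
    (i j j' : n) : A.adjugate j i = A.adjugate j' i := by
  have : Nonempty n := ⟨i⟩
  have hrow : (A.updateRow i (Pi.single j 1 - Pi.single j' 1)) *ᵥ 1 = 0 := by
    simp [updateRow_mulVec, h]
  have hsplit := det_updateRow_add A i (Pi.single j 1 - Pi.single j' 1) (Pi.single j' 1)
  rw [sub_add_cancel, det_eq_zero_of_mulVec_one_eq_zero hrow, zero_add] at hsplit
  rw [adjugate_apply, adjugate_apply, hsplit]

end

/-- If every row sum of an `n × n` matrix `L` is zero, then for any fixed row index `i`
the cofactor `(-1)^(i+j) det(L(i,j))` does not depend on the column index `j`,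
where `L(i,j)` is obtained from `L` by deleting row `i` and column `j`. -/
theorem stmt2 {R : Type*} [CommRing R] {n : ℕ} (L : Matrix (Fin (n + 1)) (Fin (n + 1)) R)
    (h : ∀ i, ∑ j, L i j = 0) (i j j' : Fin (n + 1)) :
    (-1 : R) ^ ((i : ℕ) + (j : ℕ)) * (L.submatrix i.succAbove j.succAbove).det =
      (-1 : R) ^ ((i : ℕ) + (j' : ℕ)) * (L.submatrix i.succAbove j'.succAbove).det := by
  have hL : L *ᵥ 1 = 0 := funext fun k => (dotProduct_one (L k)).trans (h k)
  rw [← adjugate_fin_succ_eq_det_submatrix, ← adjugate_fin_succ_eq_det_submatrix]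
  exact L.adjugate_apply_eq_of_mulVec_one_eq_zero hL i j j'
end

section
/- Let L be an n×n matrix over a commutative ring whose every row sum is zero, and let X = adj(L) be its adjugate. Then every entry of column j of X equals the (j,j) cofactor of L; in particular X has constant columns, i.e., X_{uj} = X_{vj} for all u, v, j. -/
/-! The all-ones vector lies in the kernel of a matrix with zero row sums, so its determinant
vanishes. Replacing row `j` of `L` by `eᵤ - eᵥ` keeps all row sums zero, and by linearity of the
determinant in row `j` the resulting determinant is `adj(L)ᵤⱼ - adj(L)ᵥⱼ`; hence the columns of
`adj(L)` are constant, and each equals its diagonal entry, the `(j, j)` cofactor. -/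

namespace Matrix

variable {ι R : Type*} [Fintype ι] [DecidableEq ι] [CommRing R]

theorem det_eq_zero_of_sum_row_eq_zero [Nonempty ι] {M : Matrix ι ι R}
    (h : ∀ i, ∑ j, M i j = 0) : M.det = 0 :=
  det_eq_zero_of_mulVec_eq_zero_of_mem_nonZeroDivisors (v := fun _ => 1)
    (i := Classical.arbitrary ι) (funext fun i => by simpa [mulVec, dotProduct] using h i)
    (one_mem _)

theorem adjugate_apply_eq_of_sum_row_eq_zero {L : Matrix ι ι R} (h : ∀ i, ∑ j, L i j = 0)
    (u v j : ι) : L.adjugate u j = L.adjugate v j := by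
  have : Nonempty ι := ⟨u⟩
  have hdiff : (L.updateRow j (Pi.single u 1 - Pi.single v 1)).det = 0 := by
    refine det_eq_zero_of_sum_row_eq_zero fun i => ?_
    by_cases hij : i = j
    · subst hij
      simp
    · simpa [updateRow_ne hij] using h i
  have hsplit := det_updateRow_add L j (Pi.single u 1 - Pi.single v 1) (Pi.single v 1)
  rw [sub_add_cancel, hdiff, zero_add] at hsplit
  rw [adjugate_apply, adjugate_apply, hsplit]

end Matrix

/-- If every row sum of `L` is zero and `X = adj(L)` is its adjugate, then every entry of
column `j` of `X` equals the `(j,j)` cofactor of `L` (so in particular `X` has constant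
columns). Recall that `(adj L) u j` is the `(j, u)` cofactor of `L`. -/
theorem stmt3 {R : Type*} [CommRing R] {n : ℕ} (L : Matrix (Fin (n + 1)) (Fin (n + 1)) R)
    (h : ∀ i, ∑ j, L i j = 0) :
    (∀ u j, L.adjugate u j = (L.submatrix j.succAbove j.succAbove).det) ∧
      ∀ u v j, L.adjugate u j = L.adjugate v j := by
  refine ⟨fun u j => ?_, Matrix.adjugate_apply_eq_of_sum_row_eq_zero h⟩
  rw [Matrix.adjugate_apply_eq_of_sum_row_eq_zero h u j j,
    Matrix.adjugate_fin_succ_eq_det_submatrix, ← two_mul, pow_mul, neg_one_sq, one_pow, one_mul]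
end

section
/- Let L be a singular n×n matrix over a commutative ring with all row sums zero, and define t_j = det(L(j,j)), the principal cofactor obtained by deleting row and column j. Then the row vector (t_1, ..., t_n) satisfies (t_1,...,t_n) · L = 0; that is, for every column u, the sum over v of t_v · L_{vu} equals 0. -/
/-!
Since `L` kills the all-ones vector, so does every matrix obtained from `L` by changing one row
to a vector with zero sum; hence such matrices are singular. By linearity of the determinant in
row `v`, this shows that `adj L u v` does not depend on `u`, so the principal cofactor `t_v`
equals `adj L u v` for every `u`, and `∑ v, t_v L v u = (adj L * L) u u = det L = 0`.
-/

namespace Matrix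

variable {R m : Type*} [CommRing R] [Fintype m] [DecidableEq m]

theorem det_eq_zero_of_forall_sum_row_eq_zero [Nonempty m] {M : Matrix m m R}
    (h : ∀ i, ∑ j, M i j = 0) : M.det = 0 := by
  have hM : M *ᵥ (fun _ => 1) = 0 := by
    ext i
    simpa [mulVec, dotProduct] using h i
  exact det_eq_zero_of_mulVec_eq_zero_of_mem_nonZeroDivisors hM
    (i := Classical.arbitrary m) (one_mem _)

theorem adjugate_apply_eq_adjugate_apply_self_of_forall_sum_row_eq_zero {L : Matrix m m R}
    (h : ∀ i, ∑ j, L i j = 0) (u v : m) : L.adjugate u v = L.adjugate v v := by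
  have : Nonempty m := ⟨u⟩
  have hsingular : (L.updateRow v (Pi.single v 1 - Pi.single u 1)).det = 0 := by
    refine det_eq_zero_of_forall_sum_row_eq_zero fun i => ?_
    rcases eq_or_ne i v with rfl | hi
    · simp [Pi.single_apply]
    · simp [updateRow_ne hi, h i]
  have hsplit := det_updateRow_add L v (Pi.single v 1 - Pi.single u 1) (Pi.single u 1)
  rw [sub_add_cancel, hsingular, zero_add] at hsplit
  rw [adjugate_apply, adjugate_apply, hsplit]

theorem det_submatrix_succAbove_eq_adjugate_apply_self {n : ℕ}
    (L : Matrix (Fin (n + 1)) (Fin (n + 1)) R) (v : Fin (n + 1)) :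
    (L.submatrix v.succAbove v.succAbove).det = L.adjugate v v := by
  simp [adjugate_fin_succ_eq_det_submatrix, ← two_mul, pow_mul]

end Matrix

theorem stmt4_general {R : Type*} [CommRing R] {n : ℕ} (L : Matrix (Fin (n + 1)) (Fin (n + 1)) R)
    (h : ∀ i, ∑ j, L i j = 0) (u : Fin (n + 1)) :
    ∑ v, (L.submatrix v.succAbove v.succAbove).det * L v u = 0 :=
  calc ∑ v, (L.submatrix v.succAbove v.succAbove).det * L v u
      = ∑ v, L.adjugate u v * L v u := by
        simp_rw [Matrix.det_submatrix_succAbove_eq_adjugate_apply_self,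
          Matrix.adjugate_apply_eq_adjugate_apply_self_of_forall_sum_row_eq_zero h u]
    _ = (L.adjugate * L) u u := Matrix.mul_apply.symm
    _ = 0 := by rw [Matrix.adjugate_mul, Matrix.det_eq_zero_of_forall_sum_row_eq_zero h,
      zero_smul, Matrix.zero_apply]

/-- For a singular matrix `L` with all row sums zero, the row vector of principal cofactors
`t_j = det(L(j,j))` is a left null vector of `L`: for every column `u`,
`∑ v, t_v · L v u = 0`. -/
theorem stmt4 {R : Type*} [CommRing R] {n : ℕ} (L : Matrix (Fin (n + 1)) (Fin (n + 1)) R)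
    (hdet : L.det = 0) (h : ∀ i, ∑ j, L i j = 0) (u : Fin (n + 1)) :
    ∑ v, (L.submatrix v.succAbove v.succAbove).det * L v u = 0 :=
  stmt4_general L h u
end

section
/- Let G be a weighted digraph on n vertices with Laplacian matrix L_G partitioned as L_G = [[D_1, -R],[-S, D_2]] where D_1, D_2 are invertible diagonal blocks. Then the Schur complements D_1 - R D_2^{-1} S and D_2 - S D_1^{-1} R both have all row sums zero, i.e., they are Laplacian matrices of weighted digraphs. -/
/-! Row sums vanish exactly when `L *ᵥ 1 = 0`. Writing `1 = (1, 1)` blockwise, `L *ᵥ 1 = 0` says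
`D₁ 1 = R 1` and `D₂ 1 = S 1`, and then `R D₂⁻¹ S 1 = R D₂⁻¹ D₂ 1 = R 1 = D₁ 1`; symmetrically for
the other complement. -/

open Matrix

namespace Matrix

theorem mulVec_one_eq_zero_iff {m n R : Type*} [Fintype n] [NonAssocSemiring R]
    (M : Matrix m n R) : M *ᵥ 1 = 0 ↔ ∀ i, ∑ j, M i j = 0 := by
  simp [funext_iff, mulVec, dotProduct]

theorem schurComplement_mulVec_eq_zero {m n R : Type*} [Fintype m] [Fintype n] [DecidableEq n]
    [CommRing R] {A : Matrix m m R} {B : Matrix m n R} {C : Matrix n m R} {D : Matrix n n R}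
    (hD : IsUnit D.det) {u : m → R} {v : n → R}
    (hAu : A *ᵥ u = B *ᵥ v) (hDv : D *ᵥ v = C *ᵥ u) :
    (A - B * D⁻¹ * C) *ᵥ u = 0 := by
  have hv : D⁻¹ *ᵥ (C *ᵥ u) = v := by
    rw [← hDv, mulVec_mulVec, nonsing_inv_mul _ hD, one_mulVec]
  rw [sub_mulVec, ← mulVec_mulVec, ← mulVec_mulVec, hv, hAu, sub_self]

end Matrix

/-- If the Laplacian matrix of a weighted digraph is partitioned as
`L_G = [[D₁, -R], [-S, D₂]]` with `D₁, D₂` invertible diagonal blocks, then both Schur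
complements `D₁ - R D₂⁻¹ S` and `D₂ - S D₁⁻¹ R` have all row sums zero, i.e. they are
Laplacian matrices of weighted digraphs. -/
theorem stmt5 {K : Type*} [Field K] {p q : ℕ} (d₁ : Fin p → K) (d₂ : Fin q → K)
    (R : Matrix (Fin p) (Fin q) K) (S : Matrix (Fin q) (Fin p) K)
    (h₁ : IsUnit (diagonal d₁).det) (h₂ : IsUnit (diagonal d₂).det)
    (hrow : ∀ i, ∑ j, (fromBlocks (diagonal d₁) (-R) (-S) (diagonal d₂)) i j = 0) :
    (∀ i, ∑ j, (diagonal d₁ - R * (diagonal d₂)⁻¹ * S) i j = 0) ∧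
      (∀ i, ∑ j, (diagonal d₂ - S * (diagonal d₁)⁻¹ * R) i j = 0) := by
  rw [← mulVec_one_eq_zero_iff, ← Sum.elim_one_one, fromBlocks_mulVec] at hrow
  have hR : diagonal d₁ *ᵥ 1 = R *ᵥ 1 := by
    simpa [neg_mulVec, ← sub_eq_add_neg, sub_eq_zero] using congr_arg (· ∘ Sum.inl) hrow
  have hS : diagonal d₂ *ᵥ 1 = S *ᵥ 1 :=
    (neg_add_eq_zero.mp (by simpa [neg_mulVec] using congr_arg (· ∘ Sum.inr) hrow)).symm
  simp_rw [← mulVec_one_eq_zero_iff]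
  exact ⟨schurComplement_mulVec_eq_zero h₂ hR hS, schurComplement_mulVec_eq_zero h₁ hS hR⟩
end

section
/- Let P be an n×n irreducible row-stochastic matrix with eigenvalues λ_1 = 1, λ_2, ..., λ_n. Define the Kemeny constant K(P) = Σ_{i=2}^{n} 1/(1-λ_i). Let R be an n×r nonnegative matrix and S an r×n nonnegative matrix such that RS = P and SR = Q is an r×r irreducible row-stochastic matrix. Then K(P) = K(Q) + n - r. -/
/-! Since `X ^ r * χ_{RS} = X ^ n * χ_{SR}`, the spectra of `RS` and `SR` agree up to `n - r`
extra zero eigenvalues. Both products are stochastic, so each has `1` among its eigenvalues;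
removing one copy of it on each side, every remaining zero eigenvalue contributes
`1 / (1 - 0) = 1` to the Kemeny constant. -/

/-- `P` is row-stochastic: nonnegative entries and all row sums equal to `1`. -/
def RowStochastic {n : Type*} [Fintype n] (P : Matrix n n ℝ) : Prop :=
  (∀ i j, 0 ≤ P i j) ∧ ∀ i, ∑ j, P i j = 1

/-- Irreducibility of a nonnegative matrix: every entry of some positive power is positive. -/
def MatIrreducible {n : Type*} [Fintype n] [DecidableEq n] (P : Matrix n n ℝ) : Prop :=
  ∀ i j, ∃ k : ℕ, 0 < k ∧ 0 < (P ^ k) i j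

/-- The Kemeny constant of `P`, defined spectrally as `∑_{λ ≠ 1} 1/(1-λ)`, the sum running
over the roots (with multiplicity) of the characteristic polynomial of `P` over `ℂ`,
with one copy of the eigenvalue `1` removed. -/
noncomputable def kemeny {n : Type*} [Fintype n] [DecidableEq n] (P : Matrix n n ℝ) : ℂ :=
  (((P.map (Complex.ofReal)).charpoly.roots.erase 1).map fun z => (1 - z)⁻¹).sum

open Polynomial Matrix

section

variable {m n : Type*} [Fintype m] [Fintype n]

theorem Matrix.roots_charpoly_mul_add_replicate [DecidableEq m] [DecidableEq n]
    {K : Type*} [Field K] (A : Matrix m n K) (B : Matrix n m K) :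
    (A * B).charpoly.roots + Multiset.replicate (Fintype.card n) 0 =
      (B * A).charpoly.roots + Multiset.replicate (Fintype.card m) 0 := by
  have h := congrArg roots (charpoly_mul_comm' A B)
  rwa [roots_mul (mul_ne_zero (pow_ne_zero _ X_ne_zero) (charpoly_monic _).ne_zero),
    roots_mul (mul_ne_zero (pow_ne_zero _ X_ne_zero) (charpoly_monic _).ne_zero),
    roots_X_pow, roots_X_pow, Multiset.nsmul_singleton, Multiset.nsmul_singleton,
    add_comm, add_comm (Multiset.replicate _ 0)] at h

theorem Matrix.isRoot_charpoly_of_mulVec_eq_smul [DecidableEq m] {K : Type*} [Field K]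
    (A : Matrix m m K) {v : m → K} (hv : v ≠ 0) {μ : K} (hAv : A *ᵥ v = μ • v) :
    A.charpoly.IsRoot μ := by
  rw [IsRoot, eval_charpoly, ← exists_mulVec_eq_zero_iff]
  exact ⟨v, hv, by ext i; simp [sub_mulVec, hAv]⟩

theorem RowStochastic.nonempty_of_mul [Nonempty m] {A : Matrix m n ℝ} {B : Matrix n m ℝ}
    (h : RowStochastic (A * B)) : Nonempty n := by
  by_contra hn
  rw [not_nonempty_iff] at hn
  simpa [mul_apply] using h.2 (Classical.arbitrary m)

theorem RowStochastic.one_mem_roots_charpoly [DecidableEq m] [Nonempty m] {P : Matrix m m ℝ}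
    (hP : RowStochastic P) : (1 : ℂ) ∈ (P.map Complex.ofReal).charpoly.roots := by
  rw [mem_roots (charpoly_monic _).ne_zero]
  refine isRoot_charpoly_of_mulVec_eq_smul _ (v := 1) one_ne_zero ?_
  ext i
  simp [mulVec, dotProduct, ← Complex.ofReal_sum, hP.2 i]

theorem kemeny_of_isEmpty [DecidableEq m] [IsEmpty m] (P : Matrix m m ℝ) : kemeny P = 0 := by
  simp [kemeny, charpoly, det_isEmpty]

theorem kemeny_mul_add_card [DecidableEq m] [DecidableEq n]
    {A : Matrix m n ℝ} {B : Matrix n m ℝ}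
    (hAB : RowStochastic (A * B)) (hBA : RowStochastic (B * A)) :
    kemeny (A * B) + Fintype.card n = kemeny (B * A) + Fintype.card m := by
  cases isEmpty_or_nonempty m with
  | inl hm =>
    have : IsEmpty n := not_nonempty_iff.mp fun _ => not_nonempty_iff.mpr hm hBA.nonempty_of_mul
    simp [kemeny_of_isEmpty]
  | inr hm =>
    have : Nonempty n := hAB.nonempty_of_mul
    have hroots := roots_charpoly_mul_add_replicate (A.map Complex.ofRealHom)
      (B.map Complex.ofRealHom)
    rw [← Matrix.map_mul, ← Matrix.map_mul] at hroots
    have herase : ((A * B).map Complex.ofReal).charpoly.roots.erase 1 +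
        Multiset.replicate (Fintype.card n) 0 =
        ((B * A).map Complex.ofReal).charpoly.roots.erase 1 +
        Multiset.replicate (Fintype.card m) 0 := by
      rw [← Multiset.erase_add_left_pos _ hAB.one_mem_roots_charpoly,
        ← Multiset.erase_add_left_pos _ hBA.one_mem_roots_charpoly]
      exact congrArg (Multiset.erase · 1) hroots
    simpa [kemeny] using congrArg (fun s => (s.map fun z : ℂ => (1 - z)⁻¹).sum) herase

end

theorem stmt6_general {n r : ℕ} (R : Matrix (Fin n) (Fin r) ℝ) (S : Matrix (Fin r) (Fin n) ℝ)
    (hP : RowStochastic (R * S)) (hQ : RowStochastic (S * R)) :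
    kemeny (R * S) = kemeny (S * R) + (n : ℂ) - (r : ℂ) := by
  have h := kemeny_mul_add_card hP hQ
  simp only [Fintype.card_fin] at h
  linear_combination h

/-- If the irreducible row-stochastic `n × n` matrix `P` factors as `P = RS` with `R, S`
nonnegative, and `Q = SR` is an irreducible row-stochastic `r × r` matrix, then the Kemeny
constants satisfy `K(P) = K(Q) + n - r`. -/
theorem stmt6 {n r : ℕ} (R : Matrix (Fin n) (Fin r) ℝ) (S : Matrix (Fin r) (Fin n) ℝ)
    (hR : ∀ i j, 0 ≤ R i j) (hS : ∀ i j, 0 ≤ S i j)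
    (hP : RowStochastic (R * S)) (hPirr : MatIrreducible (R * S))
    (hQ : RowStochastic (S * R)) (hQirr : MatIrreducible (S * R)) :
    kemeny (R * S) = kemeny (S * R) + (n : ℂ) - (r : ℂ) :=
  stmt6_general R S hP hQ
end

section
/- Let G be a digraph on n vertices in which every vertex has positive outdegree, and let G(k) be its k-blow-up. For any vertex u in the copy-class V_i, the number of oriented spanning trees of G(k) rooted at u equals k^{nk-2} · (Π_{v∈V(G)} d_v^+(G)^{k-1}) · κ_i(G), where κ_i(G) is the number of oriented spanning trees of G rooted at i. -/
/-! A digraph on a finite vertex type `V` is given by its edge set `E : Finset (V × V)`. -/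

variable {V : Type*} [Fintype V] [DecidableEq V]

/-- The outdegree of a vertex `v`: the number of edges with tail `v`. -/
def outdeg (E : Finset (V × V)) (v : V) : ℕ := (E.filter fun e => e.1 = v).card

/-- The indegree of a vertex `v`: the number of edges with head `v`. -/
def indeg (E : Finset (V × V)) (v : V) : ℕ := (E.filter fun e => e.2 = v).card

/-- The edge set of the line digraph: its vertices are the edges of `G`, with an edge
`e → f` exactly when the head of `e` is the tail of `f`. -/
def lineE (E : Finset (V × V)) : Finset ({e // e ∈ E} × {e // e ∈ E}) :=
  Finset.univ.filter fun p => (p.1 : V × V).2 = (p.2 : V × V).1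

/-- Strong connectivity: every vertex can reach every other vertex along directed edges. -/
def StronglyConnected (E : Finset (V × V)) : Prop :=
  ∀ u v : V, Relation.ReflTransGen (fun a b => (a, b) ∈ E) u v

/-- The transition matrix of the simple random walk on the digraph `E`: from `i`, move to
each out-neighbour with probability `1 / d⁺(i)`. -/
noncomputable def transMat (E : Finset (V × V)) : Matrix V V ℝ :=
  fun i j => if (i, j) ∈ E then (outdeg E i : ℝ)⁻¹ else 0

/-- `π` is a stationary distribution of `P`: positive, summing to `1`, with `πᵀ P = πᵀ`. -/
def IsStationaryDist {n : Type*} [Fintype n] (P : Matrix n n ℝ) (π : n → ℝ) : Prop :=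
  (∀ i, 0 < π i) ∧ (∑ i, π i = 1) ∧ ∀ j, ∑ i, π i * P i j = π j

/-- `f` is (the parent map of) an oriented spanning tree of `E` rooted at `u`: the root is
a fixed point, every other vertex `v` has its unique out-edge `(v, f v) ∈ E`, and iterating
`f` from any vertex reaches the root. -/
def IsSpanTree (E : Finset (V × V)) (u : V) (f : V → V) : Prop :=
  f u = u ∧ (∀ v, v ≠ u → (v, f v) ∈ E) ∧ ∀ v, ∃ k : ℕ, f^[k] v = u

/-- The number of oriented spanning trees of `E` rooted at `u`. -/
noncomputable def kappa (E : Finset (V × V)) (u : V) : ℕ :=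
  Nat.card {f : V → V // IsSpanTree E u f}

/-- `σ` is (the successor map of) an Eulerian circuit of `E`: a permutation of the edges
such that each edge is followed by an edge starting at its head, acting transitively on
the edges (a single closed walk through all edges). Eulerian circuits, counted up to
cyclic rotation, correspond bijectively to such permutations. -/
def IsEulerSucc (E : Finset (V × V)) (σ : Equiv.Perm {e // e ∈ E}) : Prop :=
  (∀ e : {e // e ∈ E}, (e : V × V).2 = ((σ e : {e // e ∈ E}) : V × V).1) ∧
    ∀ e f : {e // e ∈ E}, ∃ k : ℕ, (σ ^ k) e = f

/-- The number of Eulerian circuits of `E`. -/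
noncomputable def eulerCount (E : Finset (V × V)) : ℕ :=
  Nat.card {σ : Equiv.Perm {e // e ∈ E} // IsEulerSucc E σ}

/-- The `k`-blow-up of `E`: each vertex `i` becomes the class `{i} × Fin k`, with all edges
from the class of `i` to the class of `j` whenever `(i, j)` is an edge. -/
def blowup (E : Finset (V × V)) (k : ℕ) : Finset ((V × Fin k) × (V × Fin k)) :=
  Finset.univ.filter fun p => (p.1.1, p.2.1) ∈ E

/-- The spanning tree enumerator of `E` rooted at `u`, with edge weights induced by vertex
indeterminates `w` (the edge `(v, z)` has weight `w z`): the sum over all oriented spanning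
trees rooted at `u` of the product of the weights of their edges. -/
noncomputable def treeEnum {R : Type*} [CommRing R] (E : Finset (V × V)) (w : V → R)
    (u : V) : R :=
  ∑ᶠ (f : V → V) (_ : IsSpanTree E u f), ∏ v ∈ Finset.univ.erase u, w (f v)


/-! The directed matrix-tree theorem identifies `κ_r` with the determinant of the out-degree
Laplacian `L = D - A` with row `r` replaced by `e_r`: expanding each row over the out-edges of
its vertex writes that determinant as a sum over parent maps `g`, and the term of `g` is `1` when
every vertex reaches `r` under `g` and `0` otherwise.

For the blow-up, `L(G(k)) = k D ⊗ I - A ⊗ J`. Its reduced matrix at `u = (i, a)` factors as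
`Δ (1 - B C)` with `Δ` diagonal and `C` the adjacency matrix of `G` read through the projection
`V × Fin k → V`, so by the Weinstein–Aronszajn identity the `nk × nk` determinant collapses to the
`n × n` determinant `det (1 - C B)`. After scaling by `D` that matrix is `L` with its `i`-th
column perturbed; since `det L = 0`, only the perturbation survives, and it is the reduced
determinant of `L` at `i`, i.e. `κ_i(G)`. -/

open Matrix Finset

variable {R : Type*} [CommRing R]

def adjMat (R : Type*) [CommRing R] (E : Finset (V × V)) : Matrix V V R :=
  of fun v w => if (v, w) ∈ E then 1 else 0

def laplacian (R : Type*) [CommRing R] (E : Finset (V × V)) : Matrix V V R :=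
  diagonal (fun v => (outdeg E v : R)) - adjMat R E

def outNbrs (E : Finset (V × V)) (v : V) : Finset V := univ.filter fun w => (v, w) ∈ E

lemma card_outNbrs (E : Finset (V × V)) (v : V) : #(outNbrs E v) = outdeg E v := by
  refine card_nbij (fun w => (v, w)) ?_ ?_ ?_
  · intro w hw
    simp_all [outNbrs]
  · intro w _ w' _ h
    exact (Prod.ext_iff.mp h).2
  · rintro ⟨v', w⟩ he
    simp only [coe_filter] at he
    obtain ⟨he, rfl⟩ := he
    exact ⟨w, by simpa [outNbrs] using he, rfl⟩

lemma laplacian_row_eq_sum (E : Finset (V × V)) (v : V) :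
    laplacian R E v = ∑ w ∈ outNbrs E v, (Pi.single v 1 - Pi.single w 1) := by
  ext x
  simp only [laplacian, adjMat, Matrix.sub_apply, diagonal_apply, of_apply, Finset.sum_apply,
    Pi.sub_apply, Finset.sum_sub_distrib, sum_const, card_outNbrs, Pi.single_apply]
  simp [outNbrs, eq_comm]

lemma det_eq_zero_of_mulVec_eq_zero {M : Matrix V V R} {x : V → R} {w : V}
    (hM : M *ᵥ x = 0) (hx : x w = 1) : M.det = 0 := by
  have : M.det • x = 0 := by
    rw [← one_mulVec x, ← smul_mulVec, ← adjugate_mul, ← mulVec_mulVec, hM, mulVec_zero]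
  simpa [hx] using congrFun this w

/-- The reduced Laplacian at `r` of the digraph with edges `v → g v` for `v ≠ r`. -/
def parentMat (R : Type*) [CommRing R] (r : V) (g : V → V) : Matrix V V R :=
  of fun v => if v = r then Pi.single r 1 else Pi.single v 1 - Pi.single (g v) 1

lemma reaches_iff_reaches_apply {α : Type*} {g : α → α} {r v : α} (hv : v ≠ r) :
    (∃ m, g^[m] v = r) ↔ ∃ m, g^[m] (g v) = r := by
  constructor
  · rintro ⟨_ | m, hm⟩
    · exact absurd hm hv
    · exact ⟨m, hm⟩
  · rintro ⟨m, hm⟩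
    exact ⟨m + 1, hm⟩

lemma det_parentMat_of_reaches {r : V} {g : V → V} (h : ∀ v, ∃ m, g^[m] v = r) :
    (parentMat R r g).det = 1 := by
  classical
  -- Ordering the vertices by their distance `ρ` to the root makes the matrix triangular.
  let ρ : V → ℕ := fun v => Nat.find (h v)
  have hρ : ∀ v, v ≠ r → ρ (g v) < ρ v := by
    intro v hv
    have hpos : 0 < ρ v := Nat.pos_of_ne_zero fun h0 => hv <| by
      simpa [ρ, h0] using Nat.find_spec (h v)
    have hreach : g^[ρ v - 1] (g v) = r := by
      rw [← Function.iterate_succ_apply, Nat.succ_eq_add_one, Nat.sub_add_cancel hpos]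
      exact Nat.find_spec (h v)
    exact (Nat.find_min' _ hreach).trans_lt (Nat.sub_lt hpos one_pos)
  have hentry : ∀ v w, parentMat R r g v w ≠ 0 → v ≠ w → ρ w < ρ v := by
    intro v w hvw hne
    by_cases hv : v = r
    · subst hv
      simp_all [parentMat]
    · have hw : w = g v := by
        by_contra hw
        simp_all [parentMat]
      exact hw ▸ hρ v hv
  have htri : (parentMat R r g).BlockTriangular (OrderDual.toDual ∘ ρ) := by
    intro v w hvw
    by_contra hne
    exact (hentry v w hne (by rintro rfl; exact lt_irrefl _ hvw)).not_gt hvw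
  have hblock : ∀ a, (parentMat R r g).toSquareBlock (OrderDual.toDual ∘ ρ) a = 1 := by
    intro a
    ext ⟨x, hx⟩ ⟨y, hy⟩
    by_cases hxy : x = y
    · subst hxy
      by_cases hxr : x = r
      · simp [toSquareBlock_def, parentMat, hxr]
      · have : g x ≠ x := fun hgx => (hρ x hxr).ne (by rw [hgx])
        simp [toSquareBlock_def, parentMat, hxr, this]
    · have hρxy : ρ x = ρ y := by simpa using hx.trans hy.symm
      have : parentMat R r g x y = 0 := by
        by_contra h0
        exact (hentry x y h0 hxy).ne' hρxy
      simpa [toSquareBlock_def, hxy] using this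
  simp [htri.det, hblock]

lemma det_parentMat_of_not_reaches {r v₀ : V} {g : V → V} (h : ¬ ∃ m, g^[m] v₀ = r) :
    (parentMat R r g).det = 0 := by
  classical
  -- The indicator of the vertices that never reach `r` lies in the kernel.
  refine det_eq_zero_of_mulVec_eq_zero (x := fun v => if ∃ m, g^[m] v = r then 0 else 1)
    (w := v₀) ?_ (by simp [h])
  ext v
  by_cases hv : v = r
  · have : ∃ m, g^[m] r = r := ⟨0, rfl⟩
    simp [parentMat, mulVec, hv, this]
  · simp only [parentMat, mulVec, of_apply, if_neg hv, sub_dotProduct, single_one_dotProduct]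
    simp [reaches_iff_reaches_apply hv]

open Classical in
lemma det_parentMat (r : V) (g : V → V) :
    (parentMat R r g).det = if ∀ v, ∃ m, g^[m] v = r then 1 else 0 := by
  by_cases h : ∀ v, ∃ m, g^[m] v = r
  · rw [if_pos h, det_parentMat_of_reaches h]
  · obtain ⟨v₀, hv₀⟩ := not_forall.mp h
    rw [if_neg h, det_parentMat_of_not_reaches hv₀]

theorem det_updateRow_laplacian_eq_kappa (E : Finset (V × V)) (r : V) :
    ((laplacian R E).updateRow r (Pi.single r 1)).det = kappa E r := by
  classical
  let S : V → Finset V := fun v => if v = r then {r} else outNbrs E v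
  let row : V → V → V → R := fun v w =>
    if v = r then Pi.single r 1 else Pi.single v 1 - Pi.single w 1
  have hrows : (laplacian R E).updateRow r (Pi.single r 1) = fun v => ∑ w ∈ S v, row v w := by
    funext v
    by_cases hv : v = r
    · subst hv
      simp [S, row]
    · simp [S, row, hv, laplacian_row_eq_sum]
  have hexpand : ((laplacian R E).updateRow r (Pi.single r 1)).det =
      ∑ g ∈ Fintype.piFinset S, (parentMat R r g).det := by
    rw [hrows]
    exact (detRowAlternating : (V → R) [⋀^V]→ₗ[R] R).toMultilinearMap.map_sum_finset row S
  have htrees : (Fintype.piFinset S).filter (fun g => ∀ v, ∃ m, g^[m] v = r) =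
      univ.filter (IsSpanTree E r) := by
    ext g
    simp only [mem_filter, mem_univ, true_and, Fintype.mem_piFinset, IsSpanTree]
    constructor
    · rintro ⟨hS, hreach⟩
      exact ⟨by simpa [S] using hS r, fun v hv => by simpa [S, hv, outNbrs] using hS v, hreach⟩
    · rintro ⟨hr, hE, hreach⟩
      refine ⟨fun v => ?_, hreach⟩
      by_cases hv : v = r
      · simp [S, hv, hr]
      · simpa [S, hv, outNbrs] using hE v hv
  rw [hexpand, sum_congr rfl fun g _ => det_parentMat r g, sum_boole, htrees, kappa,
    Nat.card_eq_fintype_card, Fintype.card_subtype]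

lemma det_updateCol_single_one (M : Matrix V V R) (i : V) :
    (M.updateCol i (Pi.single i 1)).det = (M.updateRow i (Pi.single i 1)).det := by
  rw [← det_transpose, ← updateRow_transpose, ← adjugate_apply, ← adjugate_transpose,
    transpose_apply, adjugate_apply]

lemma laplacian_mulVec_one (E : Finset (V × V)) : laplacian R E *ᵥ (fun _ => 1) = 0 := by
  ext v
  simp only [mulVec, laplacian_row_eq_sum, sum_dotProduct, sub_dotProduct, single_one_dotProduct]
  simp

lemma det_laplacian [Nonempty V] (E : Finset (V × V)) : (laplacian R E).det = 0 :=
  det_eq_zero_of_mulVec_eq_zero (laplacian_mulVec_one E) (w := Classical.arbitrary V) rfl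

lemma outNbrs_blowup (E : Finset (V × V)) (k : ℕ) (s : V × Fin k) :
    outNbrs (blowup E k) s = outNbrs E s.1 ×ˢ univ := by
  ext t
  simp [outNbrs, blowup]

lemma outdeg_blowup (E : Finset (V × V)) (k : ℕ) (s : V × Fin k) :
    outdeg (blowup E k) s = outdeg E s.1 * k := by
  rw [← card_outNbrs, outNbrs_blowup, card_product, card_outNbrs, card_univ, Fintype.card_fin]

lemma laplacian_blowup (E : Finset (V × V)) (k : ℕ) :
    laplacian R (blowup E k) =
      diagonal (fun s => (outdeg E s.1 * k : R)) - (adjMat R E).submatrix Prod.fst Prod.fst := by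
  simp only [laplacian, outdeg_blowup, Nat.cast_mul]
  congr 1
  ext s t
  simp [adjMat, blowup]

/-- The class of `w` in the blow-up has `k - [w = i]` vertices other than `u = (i, a)`, each of
outdegree `k d⁺(w)`. -/
def blowupScale (E : Finset (V × V)) (k : ℕ) (i w : V) : ℚ :=
  (k - if w = i then 1 else 0) / (outdeg E w * k)

lemma det_updateRow_laplacian_blowup (E : Finset (V × V)) {k : ℕ}
    (hdeg : ∀ v, 0 < outdeg E v) (u : V × Fin k) :
    ((laplacian ℚ (blowup E k)).updateRow u (Pi.single u 1)).det =
      (∏ s ∈ univ.erase u, (outdeg E s.1 * k : ℚ)) *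
        (1 - adjMat ℚ E *
          diagonal (blowupScale E k u.1)).det := by
  have hcount : ∀ w, ∑ t : V × Fin k, (if t ≠ u ∧ t.1 = w then (1 : ℚ) else 0) =
      k - if w = u.1 then 1 else 0 := by
    intro w
    have : ∀ t : V × Fin k, (if t ≠ u ∧ t.1 = w then (1 : ℚ) else 0) =
        (if t.1 = w then 1 else 0) - if t = u then (if u.1 = w then 1 else 0) else 0 := by
      intro t
      by_cases ht : t = u <;> simp [ht]
    rw [sum_congr rfl fun t _ => this t, sum_sub_distrib, Fintype.sum_prod_type]
    simp [eq_comm]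
  have hk : (k : ℚ) ≠ 0 := Nat.cast_ne_zero.mpr (Fin.pos u.2).ne'
  have hd : ∀ v, (outdeg E v : ℚ) ≠ 0 := fun v => Nat.cast_ne_zero.mpr (hdeg v).ne'
  let D : V × Fin k → ℚ := fun s => if s = u then 1 else outdeg E s.1 * k
  let B : Matrix (V × Fin k) V ℚ :=
    of fun s w => if s ≠ u ∧ s.1 = w then (outdeg E w * k : ℚ)⁻¹ else 0
  let C : Matrix V (V × Fin k) ℚ := (adjMat ℚ E).submatrix id Prod.fst
  have hfac : (laplacian ℚ (blowup E k)).updateRow u (Pi.single u 1) =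
      diagonal D * (1 - B * C) := by
    ext s t
    rw [diagonal_mul, Matrix.sub_apply, mul_apply]
    by_cases hs : s = u
    · subst hs
      simp [D, B, Pi.single_apply, one_apply, eq_comm]
    · simp [D, B, C, hs, laplacian_blowup, one_apply, diagonal_apply]
      have := hd s.1
      split_ifs <;> field_simp
      ring
  have hCB : C * B = adjMat ℚ E *
      diagonal (blowupScale E k u.1) := by
    ext v w
    rw [mul_diagonal, mul_apply]
    calc ∑ t, C v t * B t w
        = ∑ t : V × Fin k, (if t ≠ u ∧ t.1 = w then 1 else 0) *
            (adjMat ℚ E v w * (outdeg E w * k : ℚ)⁻¹) := by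
          refine sum_congr rfl fun t _ => ?_
          by_cases ht : t ≠ u ∧ t.1 = w
          · obtain ⟨htu, rfl⟩ := ht
            simp [B, C, htu]
          · simp [B, C, ht]
      _ = _ := by rw [← sum_mul, hcount, blowupScale]; ring
  have hD : ∏ s, D s = ∏ s ∈ univ.erase u, (outdeg E s.1 * k : ℚ) := by
    rw [← mul_prod_erase univ D (mem_univ u)]
    simp only [D, if_pos rfl, one_mul]
    exact prod_congr rfl fun s hs => if_neg (ne_of_mem_erase hs)
  rw [hfac, det_mul, det_diagonal, det_one_sub_mul_comm, hCB, hD]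

lemma det_one_sub_adjMat_mul_diagonal (E : Finset (V × V)) (hdeg : ∀ v, 0 < outdeg E v)
    {k : ℕ} (hk : k ≠ 0) (i : V) :
    (1 - adjMat ℚ E *
        diagonal (blowupScale E k i)).det *
      ∏ v, (outdeg E v : ℚ) = outdeg E i / k * kappa E i := by
  have : Nonempty V := ⟨i⟩
  have hcol : (1 - adjMat ℚ E *
        diagonal (blowupScale E k i)) *
        diagonal (fun v => (outdeg E v : ℚ)) =
      (laplacian ℚ E).updateCol i ((1 - (k : ℚ)⁻¹) • (fun v => laplacian ℚ E v i) +
        (outdeg E i / k : ℚ) • Pi.single i 1) := by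
    ext v w
    have : (outdeg E w : ℚ) ≠ 0 := Nat.cast_ne_zero.mpr (hdeg w).ne'
    simp only [laplacian, adjMat, blowupScale, mul_diagonal, updateCol_apply, diagonal_apply,
      one_apply,
      Pi.single_apply, Matrix.sub_apply, of_apply, Pi.add_apply, Pi.smul_apply,
      smul_eq_mul]
    split_ifs <;> subst_vars <;> simp_all <;> field_simp <;> ring
  rw [← det_diagonal, ← det_mul, hcol, det_updateCol_add, det_updateCol_smul, det_updateCol_smul,
    updateCol_eq_self, det_laplacian, det_updateCol_single_one, det_updateRow_laplacian_eq_kappa]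
  ring

/-- Multiplied by `k ^ 2` to avoid the truncated subtraction in `k ^ (n * k - 2)`. -/
theorem kappa_blowup_mul_sq (E : Finset (V × V)) (hdeg : ∀ v, 0 < outdeg E v) {k : ℕ}
    (u : V × Fin k) :
    kappa (blowup E k) u * k ^ 2 =
      k ^ (Fintype.card V * k) * (∏ v, outdeg E v ^ (k - 1)) * kappa E u.1 := by
  have hk : k ≠ 0 := (Fin.pos u.2).ne'
  have hd : ∀ v, (outdeg E v : ℚ) ≠ 0 := fun v => Nat.cast_ne_zero.mpr (hdeg v).ne'
  have hΔ : (outdeg E u.1 * k : ℚ) * ∏ s ∈ univ.erase u, (outdeg E s.1 * k : ℚ) =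
      k ^ (Fintype.card V * k) * ∏ v, (outdeg E v : ℚ) ^ k := by
    rw [mul_prod_erase univ (fun s : V × Fin k => (outdeg E s.1 * k : ℚ)) (mem_univ u),
      Fintype.prod_prod_type]
    simp [mul_pow, prod_mul_distrib, pow_mul, mul_comm]
  have hpow : ∏ v, (outdeg E v : ℚ) ^ k =
      (∏ v, (outdeg E v : ℚ) ^ (k - 1)) * ∏ v, (outdeg E v : ℚ) := by
    rw [← prod_mul_distrib]
    exact prod_congr rfl fun v _ => (pow_sub_one_mul hk _).symm
  have hdet := det_updateRow_laplacian_blowup E hdeg u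
  rw [det_updateRow_laplacian_eq_kappa] at hdet
  have hY := det_one_sub_adjMat_mul_diagonal E hdeg hk u.1
  have hne : (outdeg E u.1 : ℚ) * ∏ v, (outdeg E v : ℚ) ≠ 0 :=
    mul_ne_zero (hd _) (prod_ne_zero_iff.mpr fun v _ => hd v)
  suffices h : (kappa (blowup E k) u : ℚ) * k ^ 2 =
      k ^ (Fintype.card V * k) * (∏ v, (outdeg E v : ℚ) ^ (k - 1)) * kappa E u.1 by
    exact_mod_cast h
  refine mul_right_cancel₀ hne ?_
  calc (kappa (blowup E k) u : ℚ) * k ^ 2 * (outdeg E u.1 * ∏ v, (outdeg E v : ℚ))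
      = k * ((outdeg E u.1 * k : ℚ) * ∏ s ∈ univ.erase u, (outdeg E s.1 * k : ℚ)) *
          ((1 - adjMat ℚ E * diagonal (blowupScale E k u.1)).det *
              ∏ v, (outdeg E v : ℚ)) := by rw [hdet]; ring
    _ = k * (k ^ (Fintype.card V * k) * ((∏ v, (outdeg E v : ℚ) ^ (k - 1)) *
          ∏ v, (outdeg E v : ℚ))) * (outdeg E u.1 / k * kappa E u.1) := by rw [hΔ, hpow, hY]
    _ = _ := by field_simp

theorem stmt11_general {n : ℕ} (E : Finset (Fin n × Fin n)) (hdeg : ∀ v, 0 < outdeg E v)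
    (k : ℕ) (i : Fin n) (a : Fin k) :
    kappa (blowup E k) (i, a) =
      k ^ (n * k - 2) * (∏ v, outdeg E v ^ (k - 1)) * kappa E i := by
  have h := kappa_blowup_mul_sq E hdeg (i, a)
  have hpow : k ^ (n * k) = k ^ (n * k - 2) * k ^ 2 := by
    rcases Nat.lt_or_ge k 2 with hk | hk
    · obtain rfl : k = 1 := by have := a.pos; omega
      simp
    · rw [← pow_add, Nat.sub_add_cancel (hk.trans (Nat.le_mul_of_pos_left k i.pos))]
  rw [Fintype.card_fin, hpow] at h
  exact Nat.eq_of_mul_eq_mul_right (pow_pos a.pos 2) (by rw [h]; ring)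

/-- For a digraph `G` on `n` vertices with every outdegree positive, and any vertex `u`
in the copy-class `V_i` of the `k`-blow-up `G(k)`, the number of oriented spanning trees
of `G(k)` rooted at `u` equals `k^(nk-2) · (∏_v d⁺(v)^(k-1)) · κ_i(G)`. -/
theorem stmt11 {n : ℕ} (E : Finset (Fin n × Fin n)) (hdeg : ∀ v, 0 < outdeg E v)
    (k : ℕ) (hk : 0 < k) (i : Fin n) (a : Fin k) :
    kappa (blowup E k) (i, a) =
      k ^ (n * k - 2) * (∏ v, outdeg E v ^ (k - 1)) * kappa E i :=
  stmt11_general E hdeg k i a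
end

section
/- Let G be a weighted digraph with vertex bipartition V(G) = V_1 ∪ V_2 and Laplacian L_G = [[L_1, -B],[-C, L_2]] with L_1, L_2 nonsingular. Let G_1 and G_2 be the weighted digraphs with Laplacians S_1 = L_1 - B L_2^{-1} C and S_2 = L_2 - C L_1^{-1} B respectively. Then for any vertex u ∈ V_1: d_u(G)·t_u(G_1) - Σ_{v∈V_1, vu∈E(G)} w_{vu}·t_v(G_1) = (det(L_1)/det(L_2)) · Σ_{v∈V_2, vu∈E(G)} w_{vu}·t_v(G_2), where t_x denotes the weighted spanning tree enumerator (equivalently, the principal cofactor of the relevant Laplacian at x) and d_u(G) the weighted outdegree of u. -/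
open Matrix

/-- The principal cofactor of a square matrix `S` at index `u`: the determinant of the
matrix obtained by deleting row `u` and column `u`. By the matrix-tree theorem this is the
spanning tree enumerator rooted at `u` when `S` is a Laplacian matrix. -/
noncomputable def pcof {K : Type*} [CommRing K] {V : Type*} [Fintype V] [DecidableEq V]
    (S : Matrix V V K) (u : V) : K :=
  (S.submatrix (fun a : {v // v ≠ u} => (a : V)) (fun a : {v // v ≠ u} => (a : V))).det

/-!
When `L` has zero row sums, every row of `adj L` is the vector `t` of principal cofactors, and
`det L = 0`; so `adj L * L = 0` says that `t ᵥ* L = 0`. Schur's determinant formula applied to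
the principal minors of `L` gives `t_{inl v}(L) = det L₂ · t_v(G₁)` and
`t_{inr v}(L) = det L₁ · t_v(G₂)`, and the column `inl u` of `t ᵥ* L = 0`, divided by
`det L₂`, is the claimed identity.
-/

section Cofactor

variable {R : Type*} [CommRing R] {n : Type*} [Fintype n] [DecidableEq n]

theorem det_updateCol_single_eq_pcof (M : Matrix n n R) (v : n) :
    (M.updateCol v (Pi.single v 1)).det = pcof M v := by
  let e := Equiv.subtypeNeSumPUnit.{0} v
  let d : {i // i ≠ v} → n := (↑)
  have hblocks : (M.updateCol v (Pi.single v 1)).submatrix e e =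
      fromBlocks (M.submatrix d d) 0 (of fun _ a => M v a) (of fun _ _ => 1) := by
    ext i j
    rcases i with ⟨i, hi⟩ | _ <;> rcases j with ⟨j, hj⟩ | _ <;>
      simp_all [e, d, fromBlocks]
  rw [← det_submatrix_equiv_self e, hblocks, det_fromBlocks_zero₁₂, pcof]
  simp [d]

theorem det_updateCol_rowSum (M : Matrix n n R) (v : n) :
    (M.updateCol v fun k => ∑ j, M k j).det = M.det := by
  simpa using det_updateCol_sum M v fun _ => 1

variable {L : Matrix n n R}

theorem det_eq_zero_of_rowSum_eq_zero [Nonempty n] (hrow : ∀ i, ∑ j, L i j = 0) :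
    L.det = 0 := by
  rw [← det_updateCol_rowSum L (Classical.arbitrary n)]
  exact det_eq_zero_of_column_eq_zero (Classical.arbitrary n) fun i => by simp [hrow]

theorem adjugate_apply_eq_pcof_of_rowSum_eq_zero (hrow : ∀ i, ∑ j, L i j = 0) (u v : n) :
    L.adjugate u v = pcof L v := by
  set N := L.updateRow v (Pi.single u 1)
  -- the row sums of `N` form `e_v`, so adding every column to column `v` exposes the cofactor
  have hrowN : (fun k => ∑ j, N k j) = Pi.single v 1 := by
    funext k
    by_cases hk : k = v
    · subst hk; simp [N]
    · simp [N, hk, hrow k]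
  rw [adjugate_apply, ← det_updateCol_rowSum N v, hrowN, det_updateCol_single_eq_pcof, pcof, pcof]
  congr 1
  ext ⟨i, hi⟩ j
  simp [N, hi]

theorem pcof_vecMul_eq_zero_of_rowSum_eq_zero (hrow : ∀ i, ∑ j, L i j = 0) :
    pcof L ᵥ* L = 0 := by
  funext j
  have : Nonempty n := ⟨j⟩
  have h := congr_fun₂ (adjugate_mul L) j j
  simp_rw [det_eq_zero_of_rowSum_eq_zero hrow, zero_smul, mul_apply,
    adjugate_apply_eq_pcof_of_rowSum_eq_zero hrow] at h
  exact h

end Cofactor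

section Blocks

variable {R : Type*} [CommRing R] {m n : Type*} [Fintype m] [DecidableEq m] [Fintype n]
  [DecidableEq n] (L : Matrix (m ⊕ n) (m ⊕ n) R)

theorem pcof_inl (h : IsUnit L.toBlocks₂₂.det) (v : m) :
    pcof L (Sum.inl v) = L.toBlocks₂₂.det *
      pcof (L.toBlocks₁₁ - L.toBlocks₁₂ * L.toBlocks₂₂⁻¹ * L.toBlocks₂₁) v := by
  have := L.toBlocks₂₂.invertibleOfIsUnitDet h
  let e : {i : m // i ≠ v} ⊕ n ≃ {x : m ⊕ n // x ≠ Sum.inl v} :=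
    ((Equiv.subtypeSum (p := (· ≠ Sum.inl v))).trans
      (Equiv.sumCongr (Equiv.subtypeEquivRight fun _ => Sum.inl_injective.ne_iff)
        (Equiv.subtypeUnivEquiv fun _ => Sum.inr_ne_inl))).symm
  let d : {i : m // i ≠ v} → m := (↑)
  have hblocks : L.submatrix ((↑) ∘ e) ((↑) ∘ e) =
      fromBlocks (L.toBlocks₁₁.submatrix d d) (L.toBlocks₁₂.submatrix d id)
        (L.toBlocks₂₁.submatrix id d) L.toBlocks₂₂ := by
    ext (_ | _) (_ | _) <;> rfl
  rw [pcof, ← det_submatrix_equiv_self e, submatrix_submatrix, hblocks, det_fromBlocks₂₂,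
    invOf_eq_nonsing_inv, pcof]
  rfl

theorem pcof_inr (h : IsUnit L.toBlocks₁₁.det) (v : n) :
    pcof L (Sum.inr v) = L.toBlocks₁₁.det *
      pcof (L.toBlocks₂₂ - L.toBlocks₂₁ * L.toBlocks₁₁⁻¹ * L.toBlocks₁₂) v := by
  have := L.toBlocks₁₁.invertibleOfIsUnitDet h
  let e : m ⊕ {i : n // i ≠ v} ≃ {x : m ⊕ n // x ≠ Sum.inr v} :=
    ((Equiv.subtypeSum (p := (· ≠ Sum.inr v))).trans
      (Equiv.sumCongr (Equiv.subtypeUnivEquiv fun _ => Sum.inl_ne_inr)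
        (Equiv.subtypeEquivRight fun _ => Sum.inr_injective.ne_iff))).symm
  let d : {i : n // i ≠ v} → n := (↑)
  have hblocks : L.submatrix ((↑) ∘ e) ((↑) ∘ e) = fromBlocks L.toBlocks₁₁
      (L.toBlocks₁₂.submatrix id d) (L.toBlocks₂₁.submatrix d id) (L.toBlocks₂₂.submatrix d d) := by
    ext (_ | _) (_ | _) <;> rfl
  rw [pcof, ← det_submatrix_equiv_self e, submatrix_submatrix, hblocks, det_fromBlocks₁₁,
    invOf_eq_nonsing_inv, pcof]
  rfl

end Blocks

/-- Let `G` be a weighted digraph with vertex bipartition `V₁ ∪ V₂` and Laplacian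
`L = [[L₁, -B], [-C, L₂]]` (so all row sums are zero), with `L₁, L₂` nonsingular, and let
`S₁ = L₁ - B L₂⁻¹ C` and `S₂ = L₂ - C L₁⁻¹ B` be the Laplacians of the weighted digraphs
`G₁, G₂`. Then for any `u ∈ V₁`, writing `t_x` for the principal cofactor (= rooted
spanning tree enumerator), `d_u = L (inl u) (inl u)` for the weighted outdegree and
`w_{vu} = -L v (inl u)` for the edge weights:
`d_u · t_u(G₁) - ∑_{v ∈ V₁, v ≠ u} w_{vu} t_v(G₁)
  = (det L₁ / det L₂) · ∑_{v ∈ V₂} w_{vu} t_v(G₂)`. -/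
theorem stmt18 {K : Type*} [Field K] {V₁ V₂ : Type*}
    [Fintype V₁] [DecidableEq V₁] [Fintype V₂] [DecidableEq V₂]
    (L : Matrix (V₁ ⊕ V₂) (V₁ ⊕ V₂) K)
    (hrow : ∀ i, ∑ j, L i j = 0)
    (h₁ : IsUnit L.toBlocks₁₁.det) (h₂ : IsUnit L.toBlocks₂₂.det)
    (u : V₁) :
    L (Sum.inl u) (Sum.inl u) *
        pcof (L.toBlocks₁₁ - (-L.toBlocks₁₂) * L.toBlocks₂₂⁻¹ * (-L.toBlocks₂₁)) u -
      ∑ v ∈ Finset.univ.erase u,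
        (-L (Sum.inl v) (Sum.inl u)) *
          pcof (L.toBlocks₁₁ - (-L.toBlocks₁₂) * L.toBlocks₂₂⁻¹ * (-L.toBlocks₂₁)) v =
    L.toBlocks₁₁.det / L.toBlocks₂₂.det *
      ∑ v : V₂, (-L (Sum.inr v) (Sum.inl u)) *
        pcof (L.toBlocks₂₂ - (-L.toBlocks₂₁) * L.toBlocks₁₁⁻¹ * (-L.toBlocks₁₂)) v := by
  have key := congr_fun (pcof_vecMul_eq_zero_of_rowSum_eq_zero hrow) (Sum.inl u)
  rw [vecMul, dotProduct, Fintype.sum_sum_type,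
    ← Finset.add_sum_erase _ _ (Finset.mem_univ u)] at key
  simp only [pcof_inl L h₂, pcof_inr L h₁, mul_assoc, ← Finset.mul_sum, Pi.zero_apply] at key
  simp only [Matrix.neg_mul, Matrix.mul_neg, neg_neg, neg_mul, Finset.sum_neg_distrib,
    sub_neg_eq_add, mul_comm (L _ _)]
  field_simp [h₂.ne_zero]
  linear_combination key
end
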